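/- arXiv:2204.01306 — 8 statements merged into one kernel-verified Lean document; each statement's English description precedes it below -/
import Mathlib

section
/- Let M be a compact metric space equipped with a Borel probability measure ℓ of full support, let U : M → [0,∞) be continuous, and let φ : [0,∞) → [0,∞) be strictly convex, continuous, and C² on (0,∞). For β > 0 let val(P_β) = inf{ 𝒰_β[ρ] : ρ a probability density on M }, where 𝒰_β[ρ] = β∫_M U ρ dℓ + ∫_M φ(ρ) dℓ. Then lim_{β→+∞} (1/β)·val(P_β) = min_M U. -/
open MeasureTheory Real Set Filter Topology
open scoped ENNReal NNReal

/-- The penalized cost `𝒰_β[ρ] = β ∫ U ρ dℓ + ∫ φ(ρ) dℓ`, with values in `[0,∞]`. -/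
noncomputable def penCost {M : Type*} [MeasurableSpace M] (ℓ : Measure M)
    (U : M → ℝ) (φ : ℝ → ℝ) (β : ℝ) (ρ : M → ℝ) : ℝ≥0∞ :=
  ENNReal.ofReal β * ∫⁻ x, ENNReal.ofReal (U x * ρ x) ∂ℓ
    + ∫⁻ x, ENNReal.ofReal (φ (ρ x)) ∂ℓ

/-- A probability density on `M` with respect to `ℓ`. -/
def IsDensity {M : Type*} [MeasurableSpace M] (ℓ : Measure M) (ρ : M → ℝ) : Prop :=
  Measurable ρ ∧ (∀ x, 0 ≤ ρ x) ∧ ∫ x, ρ x ∂ℓ = 1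

lemma lintegral_ofReal_density {M : Type*} [MeasurableSpace M] (ℓ : Measure M)
    (ρ : M → ℝ) (h : IsDensity ℓ ρ) : ∫⁻ x, ENNReal.ofReal (ρ x) ∂ℓ = 1 := by
  obtain ⟨hm, h0, h1⟩ := h
  have hint : Integrable ρ ℓ := by
    by_contra hni
    rw [integral_undef hni] at h1; norm_num at h1
  rw [← ofReal_integral_eq_lintegral_ofReal hint (Eventually.of_forall h0), h1,
    ENNReal.ofReal_one]

/-- A global optimization principle: `(1/β)·val(P_β) → min_M U` as `β → ∞`. -/
theorem stmt0 {M : Type*} [MetricSpace M] [CompactSpace M] [Nonempty M]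
    [MeasurableSpace M] [BorelSpace M]
    (ℓ : Measure M) [IsProbabilityMeasure ℓ] [ℓ.IsOpenPosMeasure]
    (U : M → ℝ) (hUc : Continuous U) (hU0 : ∀ x, 0 ≤ U x)
    (φ : ℝ → ℝ) (hφ0 : ∀ r ∈ Ici (0 : ℝ), 0 ≤ φ r)
    (hφconv : StrictConvexOn ℝ (Ici 0) φ)
    (hφcont : ContinuousOn φ (Ici 0))
    (hφC2 : ContDiffOn ℝ 2 φ (Ioi 0)) :
    Tendsto
      (fun β : ℝ =>
        (⨅ (ρ : M → ℝ) (_ : IsDensity ℓ ρ), penCost ℓ U φ β ρ).toReal / β)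
      atTop (𝓝 (⨅ x, U x)) := by
  obtain ⟨x₀, -, hx₀⟩ := isCompact_univ.exists_isMinOn univ_nonempty hUc.continuousOn
  have hx₀' : ∀ x, U x₀ ≤ U x := fun x => hx₀ (mem_univ x)
  have hmin : (⨅ x, U x) = U x₀ :=
    le_antisymm (ciInf_le ⟨0, by rintro y ⟨x, rfl⟩; exact hU0 x⟩ x₀) (le_ciInf hx₀')
  set I : ℝ → ℝ≥0∞ := fun β => ⨅ (ρ : M → ℝ) (_ : IsDensity ℓ ρ), penCost ℓ U φ β ρ with hI
  set m := U x₀ with hm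
  -- lower bound
  have hlow : ∀ β : ℝ, ENNReal.ofReal β * ENNReal.ofReal m ≤ I β := by
    intro β
    refine le_iInf₂ fun ρ hρ => ?_
    have h1 : ENNReal.ofReal m * ∫⁻ x, ENNReal.ofReal (ρ x) ∂ℓ
        ≤ ∫⁻ x, ENNReal.ofReal (U x * ρ x) ∂ℓ := by
      rw [← lintegral_const_mul' _ _ ENNReal.ofReal_ne_top]
      refine lintegral_mono fun x => ?_
      rw [← ENNReal.ofReal_mul (hU0 x₀)]
      exact ENNReal.ofReal_le_ofReal (mul_le_mul_of_nonneg_right (hx₀' x) (hρ.2.1 x))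
    calc ENNReal.ofReal β * ENNReal.ofReal m
        = ENNReal.ofReal β * (ENNReal.ofReal m * ∫⁻ x, ENNReal.ofReal (ρ x) ∂ℓ) := by
          rw [lintegral_ofReal_density ℓ ρ hρ, mul_one]
      _ ≤ ENNReal.ofReal β * ∫⁻ x, ENNReal.ofReal (U x * ρ x) ∂ℓ := mul_le_mul_right h1 _
      _ ≤ penCost ℓ U φ β ρ := le_self_add
  -- upper bound
  have hup : ∀ ε : ℝ, 0 < ε → ∃ K : ℝ, 0 ≤ K ∧ ∀ β : ℝ,
      I β ≤ ENNReal.ofReal β * ENNReal.ofReal (m + ε) + ENNReal.ofReal K := by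
    intro ε hε
    set B : Set M := {x | U x < m + ε} with hBdef
    have hBopen : IsOpen B := isOpen_lt hUc continuous_const
    have hBmeas : MeasurableSet B := hBopen.measurableSet
    have hBne : B.Nonempty := ⟨x₀, by simp [hBdef, hε]; linarith [hm]⟩
    have hB0 : ℓ B ≠ 0 := (hBopen.measure_pos ℓ hBne).ne'
    have hBtop : ℓ B ≠ ⊤ := measure_ne_top ℓ B
    set c : ℝ := (ℓ B).toReal⁻¹ with hcdef
    have hc0 : 0 < c := inv_pos.2 (ENNReal.toReal_pos hB0 hBtop)
    set ρ : M → ℝ := B.indicator fun _ => c with hρdef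
    have hρdens : IsDensity ℓ ρ := by
      refine ⟨measurable_const.indicator hBmeas, fun x => ?_, ?_⟩
      · exact Set.indicator_nonneg (fun _ _ => hc0.le) x
      · rw [hρdef, integral_indicator_const c hBmeas, smul_eq_mul, hcdef, measureReal_def,
          mul_inv_cancel₀ (ENNReal.toReal_ne_zero.2 ⟨hB0, hBtop⟩)]
    have hmε : (0:ℝ) ≤ m + ε := add_nonneg (hU0 x₀) hε.le
    refine ⟨max (φ 0) (φ c), le_max_of_le_left (hφ0 0 (mem_Ici.2 le_rfl)), fun β => ?_⟩
    refine le_trans (iInf₂_le ρ hρdens) ?_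
    have hterm1 : ∫⁻ x, ENNReal.ofReal (U x * ρ x) ∂ℓ ≤ ENNReal.ofReal (m + ε) := by
      have hpt : ∀ x, ENNReal.ofReal (U x * ρ x)
          ≤ B.indicator (fun _ => ENNReal.ofReal ((m + ε) * c)) x := by
        intro x
        by_cases hx : x ∈ B
        · simp only [hρdef, Set.indicator_of_mem hx]
          exact ENNReal.ofReal_le_ofReal
            (mul_le_mul_of_nonneg_right (le_of_lt hx) hc0.le)
        · simp [hρdef, Set.indicator_of_notMem hx]
      calc ∫⁻ x, ENNReal.ofReal (U x * ρ x) ∂ℓ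
          ≤ ∫⁻ x, B.indicator (fun _ => ENNReal.ofReal ((m + ε) * c)) x ∂ℓ :=
            lintegral_mono hpt
        _ = ENNReal.ofReal ((m + ε) * c) * ℓ B := lintegral_indicator_const hBmeas _
        _ = ENNReal.ofReal (m + ε) := by
            rw [ENNReal.ofReal_mul hmε, mul_assoc, hcdef,
              ENNReal.ofReal_inv_of_pos (ENNReal.toReal_pos hB0 hBtop),
              ENNReal.ofReal_toReal hBtop, ENNReal.inv_mul_cancel hB0 hBtop, mul_one]
    have hterm2 : ∫⁻ x, ENNReal.ofReal (φ (ρ x)) ∂ℓ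
        ≤ ENNReal.ofReal (max (φ 0) (φ c)) := by
      calc ∫⁻ x, ENNReal.ofReal (φ (ρ x)) ∂ℓ
          ≤ ∫⁻ _, ENNReal.ofReal (max (φ 0) (φ c)) ∂ℓ := by
            refine lintegral_mono fun x => ENNReal.ofReal_le_ofReal ?_
            by_cases hx : x ∈ B
            · simp [hρdef, Set.indicator_of_mem hx, le_max_right]
            · simp [hρdef, Set.indicator_of_notMem hx, le_max_left]
        _ = ENNReal.ofReal (max (φ 0) (φ c)) := by simp
    exact add_le_add (mul_le_mul_right hterm1 _) hterm2
  -- finiteness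
  obtain ⟨K₁, hK₁0, hK₁⟩ := hup 1 one_pos
  have hfin : ∀ β : ℝ, I β ≠ ⊤ := fun β =>
    ne_top_of_le_ne_top (by finiteness) (hK₁ β)
  rw [hmin]
  rw [tendsto_order]
  constructor
  · intro a ha
    filter_upwards [eventually_gt_atTop (0:ℝ)] with β hβ
    have h1 : β * m ≤ (I β).toReal := by
      have := ENNReal.toReal_mono (hfin β) (hlow β)
      rwa [ENNReal.toReal_mul, ENNReal.toReal_ofReal hβ.le,
        ENNReal.toReal_ofReal (hU0 x₀)] at this
    have : m ≤ (I β).toReal / β := (le_div_iff₀ hβ).2 (by linarith)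
    linarith
  · intro a ha
    set ε : ℝ := (a - m) / 2 with hεdef
    have hε : 0 < ε := by simp [hεdef]; linarith
    obtain ⟨K, hK0, hK⟩ := hup ε hε
    filter_upwards [eventually_gt_atTop (max 0 (K / ε))] with β hβ
    have hβ0 : 0 < β := lt_of_le_of_lt (le_max_left _ _) hβ
    have hKβ : K / β < ε := by
      rw [div_lt_iff₀ hβ0]
      have : K / ε < β := lt_of_le_of_lt (le_max_right _ _) hβ
      rw [div_lt_iff₀ hε] at this
      linarith
    have hmε : (0:ℝ) ≤ m + ε := add_nonneg (hU0 x₀) hε.le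
    have h1 : (I β).toReal ≤ β * (m + ε) + K := by
      have := ENNReal.toReal_mono (by finiteness) (hK β)
      rwa [ENNReal.toReal_add (by finiteness) (by finiteness), ENNReal.toReal_mul,
        ENNReal.toReal_ofReal hβ0.le, ENNReal.toReal_ofReal hmε,
        ENNReal.toReal_ofReal hK0] at this
    have h2 : (I β).toReal / β ≤ m + ε + K / β := by
      rw [div_le_iff₀ hβ0]
      have : (m + ε + K / β) * β = β * (m + ε) + K := by
        field_simp
      linarith [this ▸ h1]
    have : (I β).toReal / β < m + 2 * ε := by linarith
    have hae : m + 2 * ε = a := by rw [hεdef]; ring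
    linarith
end

section
/- Let M be a compact metric space equipped with a Borel probability measure ℓ of full support, let U : M → [0,∞) be continuous, and let φ : [0,∞) → [0,∞) be strictly convex, continuous, and C² on (0,∞). For each β > 0 let μ_β be a probability density minimizing 𝒰_β[ρ] = β∫_M U ρ dℓ + ∫_M φ(ρ) dℓ over probability densities (assumed to exist). Then every weak-* (narrow) limit point ν of the probability measures μ_β·ℓ as β → +∞ satisfies ∫_M U dν = min_M U; in particular ν is supported on the set of global minimizers of U. -/
open MeasureTheory Real Set Filter Topology
open scoped ENNReal NNReal

/-- Weak-* limit points of the minimizers `μ_β · ℓ` as `β → ∞` concentrate on the set of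
global minimizers of `U`. -/
theorem stmt1 {M : Type*} [MetricSpace M] [CompactSpace M] [Nonempty M]
    [MeasurableSpace M] [BorelSpace M]
    (ℓ : Measure M) [IsProbabilityMeasure ℓ] [ℓ.IsOpenPosMeasure]
    (U : M → ℝ) (hUc : Continuous U) (hU0 : ∀ x, 0 ≤ U x)
    (φ : ℝ → ℝ) (hφ0 : ∀ r ∈ Ici (0 : ℝ), 0 ≤ φ r)
    (hφconv : StrictConvexOn ℝ (Ici 0) φ)
    (hφcont : ContinuousOn φ (Ici 0))
    (hφC2 : ContDiffOn ℝ 2 φ (Ioi 0))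
    -- the family of minimizers
    (μ : ℝ → M → ℝ)
    (hμ : ∀ β > (0 : ℝ), IsDensity ℓ (μ β) ∧
      ∀ ρ : M → ℝ, IsDensity ℓ ρ → penCost ℓ U φ β (μ β) ≤ penCost ℓ U φ β ρ)
    -- a weak-* (narrow) limit point `ν` of `μ_β · ℓ` along a sequence `β_n → ∞`
    (ν : Measure M) [IsProbabilityMeasure ν]
    (βs : ℕ → ℝ) (hβs : Tendsto βs atTop atTop)
    (hlim : ∀ f : M → ℝ, Continuous f →
      Tendsto (fun n => ∫ x, f x * μ (βs n) x ∂ℓ) atTop (𝓝 (∫ x, f x ∂ν))) :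
    (∫ x, U x ∂ν = ⨅ x, U x) ∧ ∀ᵐ x ∂ν, U x = ⨅ y, U y := by
  -- the minimum of U
  obtain ⟨x₀, hx₀⟩ : ∃ x₀, ∀ y, U x₀ ≤ U y := by
    obtain ⟨x₀, -, h⟩ := isCompact_univ.exists_isMinOn univ_nonempty hUc.continuousOn
    exact ⟨x₀, fun y => h (mem_univ y)⟩
  obtain ⟨x₁, hx₁⟩ : ∃ x₁, ∀ y, U y ≤ U x₁ := by
    obtain ⟨x₁, -, h⟩ := isCompact_univ.exists_isMaxOn univ_nonempty hUc.continuousOn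
    exact ⟨x₁, fun y => h (mem_univ y)⟩
  set m := ⨅ x, U x with hm
  have hbdd : BddBelow (range U) := ⟨0, by rintro _ ⟨x, rfl⟩; exact hU0 x⟩
  have hmle : ∀ y, m ≤ U y := fun y => ciInf_le hbdd y
  have hmx₀ : m = U x₀ := le_antisymm (hmle x₀) (le_ciInf hx₀)
  have hm0 : 0 ≤ m := hmx₀ ▸ hU0 x₀
  have hUbdd : ∀ x, ‖U x‖ ≤ U x₁ := fun x => by
    rw [Real.norm_eq_abs, abs_of_nonneg (hU0 x)]; exact hx₁ x
  -- integrability of the densities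
  have hint : ∀ β > (0 : ℝ), Integrable (μ β) ℓ := by
    intro β hβ
    by_contra h
    have h0 := integral_undef h
    rw [(hμ β hβ).1.2.2] at h0
    exact one_ne_zero h0
  have hintU : ∀ β > (0 : ℝ), Integrable (fun x => U x * μ β x) ℓ := fun β hβ =>
    (hint β hβ).bdd_mul hUc.aestronglyMeasurable (Filter.Eventually.of_forall hUbdd)
  -- lower bound
  have hlow : ∀ β > (0 : ℝ), m ≤ ∫ x, U x * μ β x ∂ℓ := by
    intro β hβ
    have h1 : ∫ x, m * μ β x ∂ℓ = m := by
      rw [integral_const_mul, (hμ β hβ).1.2.2, mul_one]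
    calc m = ∫ x, m * μ β x ∂ℓ := h1.symm
      _ ≤ ∫ x, U x * μ β x ∂ℓ := integral_mono ((hint β hβ).const_mul m) (hintU β hβ)
          (fun x => mul_le_mul_of_nonneg_right (hmle x) ((hμ β hβ).1.2.1 x))
  -- upper bound from comparison with a competitor density
  have hup : ∀ ε > (0 : ℝ), ∃ C ≥ (0 : ℝ), ∀ β > (0 : ℝ),
      ∫ x, U x * μ β x ∂ℓ ≤ m + ε + C / β := by
    intro ε hε
    set A : Set M := U ⁻¹' Iio (m + ε) with hA
    have hAopen : IsOpen A := isOpen_Iio.preimage hUc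
    have hAne : A.Nonempty := ⟨x₀, by simp only [hA, mem_preimage, mem_Iio, ← hmx₀]; linarith⟩
    have hApos : 0 < ℓ A := hAopen.measure_pos ℓ hAne
    have hAfin : ℓ A < ∞ := measure_lt_top ℓ A
    set a : ℝ := (ℓ A).toReal with ha
    have ha0 : 0 < a := ENNReal.toReal_pos hApos.ne' hAfin.ne
    set ρ : M → ℝ := fun x => a⁻¹ * A.indicator 1 x with hρ
    have hρnn : ∀ x, 0 ≤ ρ x := fun x =>
      mul_nonneg (inv_nonneg.2 ha0.le) (indicator_nonneg (fun _ _ => zero_le_one) x)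
    have hρdens : IsDensity ℓ ρ := by
      refine ⟨(measurable_one.indicator hAopen.measurableSet).const_mul a⁻¹, hρnn, ?_⟩
      rw [hρ]
      rw [integral_const_mul, integral_indicator_one hAopen.measurableSet, measureReal_def, ← ha,
        inv_mul_cancel₀ ha0.ne']
    set C : ℝ := max (φ 0) (φ a⁻¹) with hC
    have hC0 : 0 ≤ C := le_max_of_le_left (hφ0 0 (by simp))
    refine ⟨C, hC0, ?_⟩
    intro β hβ
    have hmin := (hμ β hβ).2 ρ hρdens
    set L : ℝ≥0∞ := ∫⁻ x, ENNReal.ofReal (U x * μ β x) ∂ℓ with hL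
    -- bound the two parts of the competitor cost
    have hIρ : ∫⁻ x, ENNReal.ofReal (U x * ρ x) ∂ℓ ≤ ENNReal.ofReal (m + ε) := by
      have hpt : ∀ x, ENNReal.ofReal (U x * ρ x)
          ≤ A.indicator (fun _ => ENNReal.ofReal ((m + ε) * a⁻¹)) x := by
        intro x
        by_cases hx : x ∈ A
        · rw [indicator_of_mem hx]
          apply ENNReal.ofReal_le_ofReal
          have hUx : U x ≤ m + ε := le_of_lt hx
          have : ρ x = a⁻¹ := by simp [hρ, indicator_of_mem hx]
          rw [this]
          exact mul_le_mul_of_nonneg_right hUx (inv_nonneg.2 ha0.le)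
        · rw [indicator_of_notMem hx]
          have : ρ x = 0 := by simp [hρ, indicator_of_notMem hx]
          simp [this]
      calc ∫⁻ x, ENNReal.ofReal (U x * ρ x) ∂ℓ
          ≤ ∫⁻ x, A.indicator (fun _ => ENNReal.ofReal ((m + ε) * a⁻¹)) x ∂ℓ :=
            lintegral_mono hpt
        _ = ENNReal.ofReal ((m + ε) * a⁻¹) * ℓ A :=
            lintegral_indicator_const hAopen.measurableSet _
        _ = ENNReal.ofReal ((m + ε) * a⁻¹) * ENNReal.ofReal a := by
            rw [ha, ENNReal.ofReal_toReal hAfin.ne]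
        _ = ENNReal.ofReal ((m + ε) * a⁻¹ * a) := by
            rw [ENNReal.ofReal_mul (mul_nonneg (by linarith) (inv_nonneg.2 ha0.le))]
        _ = ENNReal.ofReal (m + ε) := by
            rw [mul_assoc, inv_mul_cancel₀ ha0.ne', mul_one]
    have hJρ : ∫⁻ x, ENNReal.ofReal (φ (ρ x)) ∂ℓ ≤ ENNReal.ofReal C := by
      have hpt : ∀ x, ENNReal.ofReal (φ (ρ x)) ≤ ENNReal.ofReal C := by
        intro x
        apply ENNReal.ofReal_le_ofReal
        by_cases hx : x ∈ A
        · have : ρ x = a⁻¹ := by simp [hρ, indicator_of_mem hx]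
          rw [this]; exact le_max_right _ _
        · have : ρ x = 0 := by simp [hρ, indicator_of_notMem hx]
          rw [this]; exact le_max_left _ _
      calc ∫⁻ x, ENNReal.ofReal (φ (ρ x)) ∂ℓ ≤ ∫⁻ _, ENNReal.ofReal C ∂ℓ :=
            lintegral_mono hpt
        _ = ENNReal.ofReal C := by rw [lintegral_const, measure_univ, mul_one]
    -- the key chain of inequalities
    have hchain : ENNReal.ofReal β * L ≤
        ENNReal.ofReal β * ENNReal.ofReal (m + ε) + ENNReal.ofReal C := by
      calc ENNReal.ofReal β * L ≤ penCost ℓ U φ β (μ β) := le_add_right le_rfl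
        _ ≤ penCost ℓ U φ β ρ := hmin
        _ ≤ ENNReal.ofReal β * ENNReal.ofReal (m + ε) + ENNReal.ofReal C :=
            add_le_add (mul_le_mul_right hIρ _) hJρ
    have hRHSfin : ENNReal.ofReal β * ENNReal.ofReal (m + ε) + ENNReal.ofReal C ≠ ∞ :=
      ENNReal.add_ne_top.2 ⟨ENNReal.mul_ne_top ENNReal.ofReal_ne_top ENNReal.ofReal_ne_top,
        ENNReal.ofReal_ne_top⟩
    have hβ0 : ENNReal.ofReal β ≠ 0 := by
      simp [ENNReal.ofReal_eq_zero, not_le, hβ]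
    have hLfin : L ≠ ∞ := by
      intro h
      rw [h, ENNReal.mul_top hβ0] at hchain
      exact hRHSfin (top_le_iff.mp hchain)
    -- convert to a real inequality
    have hIL : ∫ x, U x * μ β x ∂ℓ = L.toReal := by
      rw [hL, integral_eq_lintegral_of_nonneg_ae
        (Filter.Eventually.of_forall fun x => mul_nonneg (hU0 x) ((hμ β hβ).1.2.1 x))
        (hUc.aestronglyMeasurable.mul (hμ β hβ).1.1.aestronglyMeasurable)]
    have htoReal : β * L.toReal ≤ β * (m + ε) + C := by
      have h1 := ENNReal.toReal_mono hRHSfin hchain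
      rw [ENNReal.toReal_mul, ENNReal.toReal_ofReal hβ.le] at h1
      rw [ENNReal.toReal_add (ENNReal.mul_ne_top ENNReal.ofReal_ne_top ENNReal.ofReal_ne_top)
        ENNReal.ofReal_ne_top, ENNReal.toReal_mul, ENNReal.toReal_ofReal hβ.le,
        ENNReal.toReal_ofReal (by linarith), ENNReal.toReal_ofReal hC0] at h1
      exact h1
    rw [hIL]
    rw [← mul_le_mul_iff_right₀ hβ]
    calc β * L.toReal ≤ β * (m + ε) + C := htoReal
      _ = β * (m + ε + C / β) := by field_simp
  -- the sequence of energies converges to m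
  have htend : Tendsto (fun n => ∫ x, U x * μ (βs n) x ∂ℓ) atTop (𝓝 m) := by
    rw [tendsto_order]
    have hev : ∀ᶠ n in atTop, 0 < βs n := hβs.eventually_gt_atTop 0
    constructor
    · intro b hb
      filter_upwards [hev] with n hn
      exact lt_of_lt_of_le hb (hlow _ hn)
    · intro b hb
      obtain ⟨C, hC0, hC⟩ := hup ((b - m) / 2) (by linarith)
      have hdiv : Tendsto (fun n => C / βs n) atTop (𝓝 0) :=
        Tendsto.div_atTop tendsto_const_nhds hβs
      have hev2 : ∀ᶠ n in atTop, C / βs n < (b - m) / 4 :=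
        hdiv.eventually_lt_const (by linarith)
      filter_upwards [hev, hev2] with n hn1 hn2
      have h1 := hC (βs n) hn1
      linarith
  have hmain : ∫ x, U x ∂ν = m := tendsto_nhds_unique (hlim U hUc) htend
  refine ⟨hmain, ?_⟩
  -- a.e. statement
  have hUint : Integrable U ν := by
    have := (integrable_const (1 : ℝ)).bdd_mul (μ := ν) hUc.aestronglyMeasurable (Filter.Eventually.of_forall hUbdd)
    simpa using this
  have hg : ∫ x, (U x - m) ∂ν = 0 := by
    rw [integral_sub hUint (integrable_const m), hmain, integral_const, probReal_univ]
    simp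
  have hgae : (fun x => U x - m) =ᵐ[ν] 0 := by
    rw [← integral_eq_zero_iff_of_nonneg (fun x => sub_nonneg.2 (hmle x))
      (hUint.sub (integrable_const m))]
    exact hg
  filter_upwards [hgae] with x hx
  have : U x - m = 0 := hx
  linarith [this]
end

section
/- Let M be a compact metric space with a Borel probability measure ℓ, let U : M → [0,∞) be continuous, let φ : [0,∞) → [0,∞) be convex, C² on (0,∞) with φ'' > 0, whose derivative φ' is a strictly increasing continuous bijection from (0,∞) onto ℝ, with inverse ψ. Fix β > 0, let c* ∈ ℝ satisfy ∫_M ψ(c* − βU) dℓ = 1 and set μ = ψ(c* − βU). Then μ is the unique global minimizer of 𝒰_β over probability densities: for every probability density ρ, 𝒰_β[ρ] ≥ 𝒰_β[μ], with strict inequality unless ρ = μ ℓ-almost everywhere, where 𝒰_β[ρ] = β∫_M Uρ dℓ + ∫_M φ(ρ) dℓ. -/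
open MeasureTheory Real Set Filter Topology
open scoped ENNReal NNReal

lemma tangent_line {φ φ' : ℝ → ℝ}
    (hφcont : ContinuousOn φ (Ici 0))
    (hd1 : ∀ r ∈ Ioi (0:ℝ), HasDerivAt φ (φ' r) r)
    (hmono : StrictMonoOn φ' (Ioi 0))
    {t r : ℝ} (ht : 0 < t) (hr : 0 ≤ r) :
    φ t + φ' t * (r - t) ≤ φ r ∧ (r ≠ t → φ t + φ' t * (r - t) < φ r) := by
  rcases lt_trichotomy r t with h | h | h
  · have hsub : Icc r t ⊆ Ici (0:ℝ) := fun x hx => hr.trans hx.1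
    obtain ⟨c, hc, hceq⟩ := exists_hasDerivAt_eq_slope φ φ' h (hφcont.mono hsub)
      (fun x hx => hd1 x (hr.trans_lt hx.1))
    have hc0 : (0:ℝ) < c := hr.trans_lt hc.1
    have hlt : φ' c < φ' t := hmono hc0 ht hc.2
    have h1 : φ t - φ r = φ' c * (t - r) := by
      rw [eq_div_iff (sub_ne_zero.mpr h.ne')] at hceq; linarith [hceq]
    have : φ t + φ' t * (r - t) < φ r := by nlinarith [sub_pos.mpr h]
    exact ⟨this.le, fun _ => this⟩
  · subst h; simp
  · have hsub : Icc t r ⊆ Ici (0:ℝ) := fun x hx => (ht.le).trans hx.1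
    obtain ⟨c, hc, hceq⟩ := exists_hasDerivAt_eq_slope φ φ' h (hφcont.mono hsub)
      (fun x hx => hd1 x (ht.trans hx.1))
    have hlt : φ' t < φ' c := hmono ht (ht.trans hc.1) hc.1
    have h1 : φ r - φ t = φ' c * (r - t) := by
      rw [eq_div_iff (sub_ne_zero.mpr h.ne')] at hceq; linarith [hceq]
    have : φ t + φ' t * (r - t) < φ r := by nlinarith [sub_pos.mpr h]
    exact ⟨this.le, fun _ => this⟩

/-- The stationary density `μ = ψ(c* − βU)` is the unique global minimizer of `𝒰_β`
over probability densities. -/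
theorem stmt4 {M : Type*} [MetricSpace M] [CompactSpace M] [Nonempty M]
    [MeasurableSpace M] [BorelSpace M]
    (ℓ : Measure M) [IsProbabilityMeasure ℓ]
    (U : M → ℝ) (hUc : Continuous U) (hU0 : ∀ x, 0 ≤ U x)
    (φ φ' φ'' ψ : ℝ → ℝ)
    (hφ0 : ∀ r ∈ Ici (0 : ℝ), 0 ≤ φ r)
    (hφconv : ConvexOn ℝ (Ici 0) φ)
    (hφcont : ContinuousOn φ (Ici 0))
    -- `φ` is C² on `(0,∞)` with first derivative `φ'` and second derivative `φ''`
    (hd1 : ∀ r ∈ Ioi (0 : ℝ), HasDerivAt φ (φ' r) r)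
    (hd2 : ∀ r ∈ Ioi (0 : ℝ), HasDerivAt φ' (φ'' r) r)
    (hd2c : ContinuousOn φ'' (Ioi 0))
    (hφ''pos : ∀ r ∈ Ioi (0 : ℝ), 0 < φ'' r)
    -- `φ'` is a strictly increasing continuous bijection from `(0,∞)` onto `ℝ`
    (hmono : StrictMonoOn φ' (Ioi 0))
    (hcont : ContinuousOn φ' (Ioi 0))
    (hsurj : ∀ s : ℝ, ∃ r ∈ Ioi (0 : ℝ), φ' r = s)
    -- `ψ : ℝ → (0,∞)` is the (continuous) inverse of `φ'`
    (hψleft : ∀ r ∈ Ioi (0 : ℝ), ψ (φ' r) = r)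
    (hψpos : ∀ s : ℝ, 0 < ψ s)
    (hψright : ∀ s : ℝ, φ' (ψ s) = s)
    (hψcont : Continuous ψ)
    -- the stationary density `μ = ψ(c* − βU)`
    (β : ℝ) (hβ : 0 < β) (cs : ℝ)
    (hcs : ∫ x, ψ (cs - β * U x) ∂ℓ = 1)
    (μ : M → ℝ) (hμdef : μ = fun x => ψ (cs - β * U x)) :
    ∀ ρ : M → ℝ, IsDensity ℓ ρ →
      penCost ℓ U φ β μ ≤ penCost ℓ U φ β ρ ∧
      (¬ ρ =ᵐ[ℓ] μ → penCost ℓ U φ β μ < penCost ℓ U φ β ρ) := by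
  intro ρ hρ
  obtain ⟨hρm, hρ0, hρ1⟩ := hρ
  have hμcont : Continuous μ := by
    rw [hμdef]
    exact hψcont.comp (continuous_const.sub (continuous_const.mul hUc))
  have hμm : Measurable μ := hμcont.measurable
  have hμpos : ∀ x, 0 < μ x := by rw [hμdef]; exact fun x => hψpos _
  have hμ1 : ∫ x, μ x ∂ℓ = 1 := by rw [hμdef]; exact hcs
  have hμslope : ∀ x, φ' (μ x) = cs - β * U x := by
    rw [hμdef]; exact fun x => hψright _
  -- continuity/measurability of φ composed with a nonneg function
  have hφtilde : Continuous (fun t : ℝ => φ (max t 0)) :=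
    hφcont.comp_continuous (continuous_id.max continuous_const) fun t => mem_Ici.mpr (le_max_right _ _)
  have hφρm : Measurable fun x => φ (ρ x) := by
    have : (fun x => φ (ρ x)) = fun x => φ (max (ρ x) 0) := by
      funext x; rw [max_eq_left (hρ0 x)]
    rw [this]; exact hφtilde.measurable.comp hρm
  set f : M → ℝ := fun x => β * U x * ρ x + φ (ρ x) with hfdef
  set g : M → ℝ := fun x => β * U x * μ x + φ (μ x) with hgdef
  have hfm : Measurable f := (((measurable_const.mul hUc.measurable).mul hρm).add hφρm)
  have hgcont : Continuous g := by
    refine ((continuous_const.mul hUc).mul hμcont).add ?_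
    exact (hφcont.comp_continuous hμcont fun x => (hμpos x).le)
  have hf0 : ∀ x, 0 ≤ f x := fun x => by
    have := hφ0 (ρ x) (hρ0 x)
    have := mul_nonneg (mul_nonneg hβ.le (hU0 x)) (hρ0 x)
    simp only [hfdef]; positivity
  have hg0 : ∀ x, 0 ≤ g x := fun x => by
    have h1 := hφ0 (μ x) (hμpos x).le
    have h2 := mul_nonneg (mul_nonneg hβ.le (hU0 x)) (hμpos x).le
    simp only [hgdef]; linarith
  -- rewrite penCost as a single lintegral
  have hpen : ∀ (σ : M → ℝ), Measurable σ → (∀ x, 0 ≤ σ x) →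
      penCost ℓ U φ β σ = ∫⁻ x, ENNReal.ofReal (β * U x * σ x + φ (σ x)) ∂ℓ := by
    intro σ hσm hσ0
    have h1 : Measurable fun x => ENNReal.ofReal (U x * σ x) :=
      (hUc.measurable.mul hσm).ennreal_ofReal
    rw [penCost, ← lintegral_const_mul _ h1, ← lintegral_add_left (h1.const_mul _)]
    congr 1; funext x
    rw [← ENNReal.ofReal_mul hβ.le, ← mul_assoc,
      ← ENNReal.ofReal_add (mul_nonneg (mul_nonneg hβ.le (hU0 x)) (hσ0 x)) (hφ0 _ (hσ0 x))]
  have hgInt : Integrable g ℓ :=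
    hgcont.integrable_of_hasCompactSupport (isClosed_tsupport g).isCompact
  have hpenμ : penCost ℓ U φ β μ = ENNReal.ofReal (∫ x, g x ∂ℓ) := by
    rw [hpen μ hμm fun x => (hμpos x).le]
    exact (ofReal_integral_eq_lintegral_ofReal hgInt (ae_of_all _ hg0)).symm
  by_cases htop : penCost ℓ U φ β ρ = ⊤
  · refine ⟨htop ▸ le_top, fun _ => ?_⟩
    rw [htop, hpenμ]; exact ENNReal.ofReal_lt_top
  -- ρ side is finite, so f is integrable
  have hfInt : Integrable f ℓ := by
    refine ⟨hfm.aestronglyMeasurable, ?_⟩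
    rw [hasFiniteIntegral_iff_ofReal (ae_of_all _ hf0)]
    rw [hpen ρ hρm hρ0] at htop
    exact lt_top_iff_ne_top.mpr htop
  have hpenρ : penCost ℓ U φ β ρ = ENNReal.ofReal (∫ x, f x ∂ℓ) := by
    rw [hpen ρ hρm hρ0]
    exact (ofReal_integral_eq_lintegral_ofReal hfInt (ae_of_all _ hf0)).symm
  have hρInt : Integrable ρ ℓ := by
    by_contra h; rw [integral_undef h] at hρ1; norm_num at hρ1
  have hμInt : Integrable μ ℓ :=
    hμcont.integrable_of_hasCompactSupport (isClosed_tsupport μ).isCompact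
  set k : M → ℝ := fun x => f x - g x - cs * (ρ x - μ x) with hkdef
  have hkInt : Integrable k ℓ :=
    (hfInt.sub hgInt).sub ((hρInt.sub hμInt).const_mul cs)
  have hk : ∀ x, 0 ≤ k x ∧ (ρ x ≠ μ x → 0 < k x) := by
    intro x
    obtain ⟨hle, hlt⟩ := tangent_line hφcont hd1 hmono (hμpos x) (hρ0 x)
    rw [hμslope x] at hle hlt
    constructor
    · simp only [hkdef, hfdef, hgdef]; nlinarith [hle]
    · intro hne
      have := hlt hne
      simp only [hkdef, hfdef, hgdef]; nlinarith [this]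
  have hkint_eq : ∫ x, k x ∂ℓ = (∫ x, f x ∂ℓ) - ∫ x, g x ∂ℓ := by
    simp only [hkdef]
    have h1 : Integrable (fun x => f x - g x) ℓ := hfInt.sub hgInt
    have h2 : Integrable (fun x => cs * (ρ x - μ x)) ℓ :=
      (hρInt.sub hμInt).const_mul cs
    have h3 : Integrable (fun x => ρ x - μ x) ℓ := hρInt.sub hμInt
    rw [integral_sub h1 h2, integral_sub hfInt hgInt, integral_const_mul,
      integral_sub hρInt hμInt, hρ1, hμ1]
    ring
  have hle : ∫ x, g x ∂ℓ ≤ ∫ x, f x ∂ℓ := by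
    have : 0 ≤ ∫ x, k x ∂ℓ := integral_nonneg fun x => (hk x).1
    linarith [hkint_eq ▸ this]
  constructor
  · rw [hpenμ, hpenρ]; exact ENNReal.ofReal_le_ofReal hle
  · intro hne
    have hsetne : ℓ {x | ρ x ≠ μ x} ≠ 0 := by
      intro h0
      exact hne (by rwa [EventuallyEq, ae_iff])
    have hkpos : 0 < ∫ x, k x ∂ℓ := by
      rw [integral_pos_iff_support_of_nonneg (fun x => (hk x).1) hkInt]
      refine lt_of_lt_of_le (pos_iff_ne_zero.mpr hsetne) (measure_mono ?_)
      intro x hx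
      exact ((hk x).2 hx).ne'
    have hlt : ∫ x, g x ∂ℓ < ∫ x, f x ∂ℓ := by
      rw [hkint_eq] at hkpos; linarith
    rw [hpenμ, hpenρ]
    have hg_nonneg : 0 ≤ ∫ x, g x ∂ℓ := integral_nonneg hg0
    exact (ENNReal.ofReal_lt_ofReal_iff (lt_of_le_of_lt hg_nonneg hlt)).mpr hlt
end

section
/- Let M be a compact metric space with a Borel probability measure ℓ, let U : M → [0,∞) be continuous and non-constant, fix m ∈ (0,1), and let φ = φ_{m,2} with inverse derivative ψ = ψ_{m,2}. Fix β > 0, let c* ∈ ℝ be such that ∫_M ψ(c* − βU) dℓ = 1 and set μ = ψ(c* − βU), μ_min = min_M μ, μ_max = max_M μ. Then (1 + (1−m)β·osc(U))^{1/(m−1)} ≤ μ_min ≤ μ_max ≤ β·osc(U) + 1, where osc(U) = max_M U − min_M U. -/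
open MeasureTheory Real Set Filter Topology
open scoped ENNReal NNReal

/-- `φ_m(r) = (r^m − 1 − m(r−1))/(m(m−1))`. -/
noncomputable def phim (m r : ℝ) : ℝ := (r ^ m - 1 - m * (r - 1)) / (m * (m - 1))

/-- The glued potential `φ_{m,2}`: `φ_m` on `[0,1]` and `(r−1)²/2` on `(1,∞)`. -/
noncomputable def phim2 (m r : ℝ) : ℝ := if r ≤ 1 then phim m r else (r - 1) ^ 2 / 2

/-- The derivative `φ'_{m,2}`. -/
noncomputable def dphim2 (m r : ℝ) : ℝ :=
  if r ≤ 1 then (r ^ (m - 1) - 1) / (m - 1) else r - 1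

/-- The second derivative `φ''_{m,2}`. -/
noncomputable def ddphim2 (m r : ℝ) : ℝ := if r ≤ 1 then r ^ (m - 2) else 1

/-- `ψ_{m,2}`, the inverse of `φ'_{m,2}`. -/
noncomputable def psim2 (m s : ℝ) : ℝ :=
  if s ≤ 0 then (1 + (m - 1) * s) ^ (1 / (m - 1)) else 1 + s

/-!
Since `ψ = ψ_{m,2}` is strictly increasing with `ψ(0) = 1`, and the density `μ = ψ(c* − βU)` has
integral `1` against a probability measure, it takes a value `≤ 1` at some `x₀` and a value `≥ 1`
at some `x₁`. Hence `c* − βU(x₀) ≤ 0 ≤ c* − βU(x₁)`, which pins the argument `c* − βU(x)` in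
`[−β·osc(U), β·osc(U)]` everywhere; evaluating `ψ` at the two endpoints gives the bounds.
-/

lemma psim2_of_nonneg (m : ℝ) {s : ℝ} (hs : 0 ≤ s) : psim2 m s = 1 + s := by
  rcases hs.eq_or_lt with rfl | hs
  · simp [psim2]
  · simp [psim2, not_le.2 hs]

lemma psim2_zero (m : ℝ) : psim2 m 0 = 1 := by
  simp [psim2_of_nonneg m le_rfl]

lemma psim2_strictMono {m : ℝ} (hm : m < 1) : StrictMono (psim2 m) := by
  have hexp : 1 / (m - 1) < 0 := one_div_neg.2 (by linarith)
  intro s t hst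
  rcases le_or_gt t 0 with ht | ht
  · have hbase : 0 < 1 + (m - 1) * t := by nlinarith
    rw [psim2, psim2, if_pos (hst.le.trans ht), if_pos ht]
    exact rpow_lt_rpow_of_neg hbase (by nlinarith) hexp
  · rw [psim2_of_nonneg m ht.le]
    rcases le_or_gt s 0 with hs | hs
    · rw [psim2, if_pos hs]
      have hbase : 1 ≤ 1 + (m - 1) * s := by nlinarith
      linarith [rpow_le_one_of_one_le_of_nonpos hbase hexp.le]
    · rw [psim2_of_nonneg m hs.le]
      linarith

lemma sub_le_ciSup_sub_ciInf {ι : Type*} {U : ι → ℝ} (hU : Bornology.IsBounded (range U))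
    (x y : ι) : U x - U y ≤ (⨆ i, U i) - ⨅ i, U i :=
  sub_le_sub (le_ciSup hU.bddAbove x) (ciInf_le hU.bddBelow y)

theorem stmt5_general {M : Type*} [MetricSpace M] [CompactSpace M]
    [MeasurableSpace M]
    (ℓ : Measure M) [IsProbabilityMeasure ℓ]
    (U : M → ℝ) (hUc : Continuous U)
    (m : ℝ) (hm : m ∈ Ioo (0 : ℝ) 1)
    (β : ℝ) (hβ : 0 < β) (cs : ℝ)
    (hcs : ∫ x, psim2 m (cs - β * U x) ∂ℓ = 1) :
    ∀ x : M,
      (1 + (1 - m) * (β * ((⨆ y, U y) - ⨅ y, U y))) ^ (1 / (m - 1))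
          ≤ psim2 m (cs - β * U x) ∧
      psim2 m (cs - β * U x) ≤ β * ((⨆ y, U y) - ⨅ y, U y) + 1 := by
  intro x
  have hψ := psim2_strictMono hm.2
  -- a non-integrable function would have the junk integral `0`
  have hint : Integrable (fun x ↦ psim2 m (cs - β * U x)) ℓ :=
    Integrable.of_integral_ne_zero (by rw [hcs]; exact one_ne_zero)
  obtain ⟨x₀, hx₀⟩ := exists_le_integral hint
  obtain ⟨x₁, hx₁⟩ := exists_integral_le hint
  rw [hcs, ← psim2_zero m, hψ.le_iff_le] at hx₀ hx₁
  have hbdd := (isCompact_range hUc).isBounded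
  set osc := (⨆ y, U y) - ⨅ y, U y
  have hosc : 0 ≤ osc := by simpa only [sub_self] using sub_le_ciSup_sub_ciInf hbdd x x
  constructor
  · calc (1 + (1 - m) * (β * osc)) ^ (1 / (m - 1)) = psim2 m (-(β * osc)) := by
          rw [psim2, if_pos (by nlinarith)]; ring_nf
      _ ≤ psim2 m (cs - β * U x) :=
          hψ.monotone (by nlinarith [sub_le_ciSup_sub_ciInf hbdd x x₁])
  · calc psim2 m (cs - β * U x) ≤ psim2 m (β * osc) :=
          hψ.monotone (by nlinarith [sub_le_ciSup_sub_ciInf hbdd x₀ x])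
      _ = β * osc + 1 := by rw [psim2_of_nonneg m (by positivity), add_comm]

/-- Bounds for the stationary density: for `0 < m < 1`,
`(1 + (1−m)β·osc(U))^{1/(m−1)} ≤ μ_min ≤ μ_max ≤ β·osc(U) + 1`. -/
theorem stmt5 {M : Type*} [MetricSpace M] [CompactSpace M] [Nonempty M]
    [MeasurableSpace M] [BorelSpace M]
    (ℓ : Measure M) [IsProbabilityMeasure ℓ]
    (U : M → ℝ) (hUc : Continuous U) (hU0 : ∀ x, 0 ≤ U x)
    (hUnc : ∃ x y, U x ≠ U y)
    (m : ℝ) (hm : m ∈ Ioo (0 : ℝ) 1)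
    (β : ℝ) (hβ : 0 < β) (cs : ℝ)
    (hcs : ∫ x, psim2 m (cs - β * U x) ∂ℓ = 1) :
    ∀ x : M,
      (1 + (1 - m) * (β * ((⨆ y, U y) - ⨅ y, U y))) ^ (1 / (m - 1))
          ≤ psim2 m (cs - β * U x) ∧
      psim2 m (cs - β * U x) ≤ β * ((⨆ y, U y) - ⨅ y, U y) + 1 :=
  stmt5_general ℓ U hUc m hm β hβ cs hcs
end

section
/- Let φ : (0,∞) → ℝ be C² with φ'' > 0 and with φ' concave, and suppose φ' is a bijection from (0,∞) onto ℝ with inverse ψ. Then for every fixed g ∈ ℝ the function F : (0,∞) → ℝ defined by F(r) = φ(ψ(g + φ'(r))) − φ(r) − φ'(r)·(ψ(g + φ'(r)) − r) is nondecreasing on (0,∞). -/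
open MeasureTheory Real Set Filter Topology
open scoped ENNReal NNReal

/-- For each fixed `g`, the function
`F(r) = φ(ψ(g + φ'(r))) − φ(r) − φ'(r)·(ψ(g + φ'(r)) − r)` is nondecreasing on `(0,∞)`. -/
theorem stmt7 (φ φ' φ'' ψ : ℝ → ℝ)
    -- `φ` is C² on `(0,∞)` with first derivative `φ'` and second derivative `φ''`
    (hd1 : ∀ r ∈ Ioi (0 : ℝ), HasDerivAt φ (φ' r) r)
    (hd2 : ∀ r ∈ Ioi (0 : ℝ), HasDerivAt φ' (φ'' r) r)
    (hφ''pos : ∀ r ∈ Ioi (0 : ℝ), 0 < φ'' r)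
    -- `φ'` is concave on `(0,∞)`
    (hconc : ConcaveOn ℝ (Ioi 0) φ')
    -- `φ'` is a bijection from `(0,∞)` onto `ℝ` with inverse `ψ`
    (hψleft : ∀ r ∈ Ioi (0 : ℝ), ψ (φ' r) = r)
    (hψpos : ∀ s : ℝ, 0 < ψ s)
    (hψright : ∀ s : ℝ, φ' (ψ s) = s)
    (g : ℝ) :
    MonotoneOn (fun r => φ (ψ (g + φ' r)) - φ r - φ' r * (ψ (g + φ' r) - r))
      (Ioi (0 : ℝ)) := by
  -- φ' is strictly monotone on Ioi 0
  have hsm : StrictMonoOn φ' (Ioi (0:ℝ)) := by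
    apply strictMonoOn_of_deriv_pos (convex_Ioi 0)
    · exact fun x hx => ((hd2 x hx).continuousAt).continuousWithinAt
    · intro x hx
      rw [interior_Ioi] at hx
      rw [(hd2 x hx).deriv]
      exact hφ''pos x hx
  -- ψ is monotone
  have hψmono : Monotone ψ := by
    intro s t hst
    by_contra h
    push_neg at h
    have := hsm (hψpos t) (hψpos s) h
    rw [hψright, hψright] at this
    exact absurd hst (not_le.mpr this)
  -- ψ is continuous
  have hψcont : Continuous ψ := by
    rw [continuous_iff_continuousAt]
    intro a
    refine continuousAt_of_monotoneOn_of_image_mem_nhds (s := univ)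
      (fun x _ y _ hxy => hψmono hxy) univ_mem ?_
    refine mem_of_superset (Ioi_mem_nhds (hψpos a)) ?_
    intro r hr
    exact ⟨φ' r, mem_univ _, hψleft r hr⟩
  -- ψ has derivative (φ'' (ψ s))⁻¹ at every s
  have hψd : ∀ s : ℝ, HasDerivAt ψ (φ'' (ψ s))⁻¹ s := by
    intro s
    exact HasDerivAt.of_local_left_inverse (hψcont.continuousAt)
      (hd2 (ψ s) (hψpos s)) (ne_of_gt (hφ''pos _ (hψpos s)))
      (Filter.Eventually.of_forall hψright)
  set F : ℝ → ℝ := fun r => φ (ψ (g + φ' r)) - φ r - φ' r * (ψ (g + φ' r) - r) with hF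
  -- derivative of F
  have hFd : ∀ r ∈ Ioi (0:ℝ), HasDerivAt F
      (φ'' r * (g * (φ'' (ψ (g + φ' r)))⁻¹ - (ψ (g + φ' r) - r))) r := by
    intro r hr
    set u := ψ (g + φ' r) with hu
    have hupos : u ∈ Ioi (0:ℝ) := hψpos _
    have hinner : HasDerivAt (fun r => g + φ' r) (φ'' r) r := (hd2 r hr).const_add g
    have huDeriv : HasDerivAt (fun r => ψ (g + φ' r)) ((φ'' u)⁻¹ * φ'' r) r :=
      (hψd (g + φ' r)).comp r hinner
    have h1 : HasDerivAt (fun r => φ (ψ (g + φ' r))) (φ' u * ((φ'' u)⁻¹ * φ'' r)) r :=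
      (hd1 u hupos).comp r huDeriv
    have h2 : HasDerivAt (fun r => φ' r * (ψ (g + φ' r) - r))
        (φ'' r * (u - r) + φ' r * ((φ'' u)⁻¹ * φ'' r - 1)) r :=
      (hd2 r hr).mul (huDeriv.sub (hasDerivAt_id r))
    have h3 := (h1.sub (hd1 r hr)).sub h2
    refine h3.congr_deriv ?_
    have hgu : φ' u = g + φ' r := hψright _
    have hne : φ'' u ≠ 0 := ne_of_gt (hφ''pos _ hupos)
    linear_combination (φ'' r * (φ'' u)⁻¹) * hgu
  -- the derivative is nonnegative
  have hFnonneg : ∀ r ∈ Ioi (0:ℝ),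
      0 ≤ φ'' r * (g * (φ'' (ψ (g + φ' r)))⁻¹ - (ψ (g + φ' r) - r)) := by
    intro r hr
    set u := ψ (g + φ' r) with hu
    have hupos : u ∈ Ioi (0:ℝ) := hψpos _
    have hgu : φ' u - φ' r = g := by rw [hψright]; ring
    have hupos' := hφ''pos _ hupos
    -- key: φ'' u * (u - r) ≤ g
    have key : φ'' u * (u - r) ≤ g := by
      rcases lt_trichotomy u r with h | h | h
      · have := hconc.slope_le_of_hasDerivAt hupos hr h (hd2 u hupos)
        rw [slope_def_field] at this
        have hrupos : 0 < r - u := by linarith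
        rw [div_le_iff₀ hrupos] at this
        nlinarith
      · simp [h, ← hgu]
      · have := hconc.le_slope_of_hasDerivAt hr hupos h (hd2 u hupos)
        rw [slope_def_field] at this
        have hurpos : 0 < u - r := by linarith
        rw [le_div_iff₀ hurpos] at this
        nlinarith
    have h2 : 0 ≤ g * (φ'' u)⁻¹ - (u - r) := by
      have : u - r ≤ g / φ'' u := by
        rw [le_div_iff₀ hupos']; nlinarith
      rw [div_eq_mul_inv] at this
      linarith
    exact mul_nonneg (le_of_lt (hφ''pos r hr)) h2
  -- conclude monotonicity
  apply monotoneOn_of_deriv_nonneg (convex_Ioi 0)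
  · exact fun x hx => ((hFd x hx).continuousAt).continuousWithinAt
  · intro x hx
    rw [interior_Ioi] at hx
    exact (hFd x hx).differentiableAt.differentiableWithinAt
  · intro x hx
    rw [interior_Ioi] at hx
    rw [(hFd x hx).deriv]
    exact hFnonneg x hx
end

section
/- Fix m ∈ (0,1/2) and set η = (1−2m)/(2(1−m)) ∈ (0,1/2). Let a ∈ (0,1), set C₀ = 1 − (1−m)·φ'_{m,2}(a), and define θ : ℝ → ℝ by θ(r) = ∫_0^r √( ψ_{m,2}(s + φ'_{m,2}(a)) ) ds. Then for every r ∈ ℝ, |θ(r)| ≥ (2/3) · min( (C₀ + (1−m))^{−(3/2 − η)}, φ''_{m,2}(a)^{−1/2} ) · min( |r|^{3/2}, |r|^{η} ). -/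
open MeasureTheory Real Set Filter Topology
open scoped ENNReal NNReal

lemma psim2_mono {m : ℝ} (hm1 : m - 1 < 0) : Monotone (psim2 m) := by
  intro x y hxy
  unfold psim2
  have hp : 1 / (m - 1) ≤ 0 := (one_div_neg.mpr hm1).le
  split_ifs with hx hy hy
  · exact Real.rpow_le_rpow_of_nonpos (by nlinarith) (by nlinarith) hp
  · push_neg at hy
    have h1 : (1 + (m - 1) * x) ^ (1 / (m - 1)) ≤ 1 :=
      Real.rpow_le_one_of_one_le_of_nonpos (by nlinarith) hp
    linarith
  · linarith
  · linarith

set_option maxHeartbeats 2000000 in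
/-- Lower bound for `θ(r) = ∫_0^r √(ψ_{m,2}(s + φ'_{m,2}(a))) ds`. -/
theorem stmt9 (m : ℝ) (hm : m ∈ Ioo (0 : ℝ) (1/2))
    (η : ℝ) (hη : η = (1 - 2*m) / (2*(1 - m)))
    (a : ℝ) (ha : a ∈ Ioo (0 : ℝ) 1)
    (C₀ : ℝ) (hC₀ : C₀ = 1 - (1 - m) * dphim2 m a) :
    ∀ r : ℝ,
      2/3 * min ((C₀ + (1 - m)) ^ (-(3/2 - η))) ((ddphim2 m a) ^ (-(1/2) : ℝ))
          * min (|r| ^ (3/2 : ℝ)) (|r| ^ η)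
        ≤ |∫ s in (0:ℝ)..r, Real.sqrt (psim2 m (s + dphim2 m a))| := by
  obtain ⟨hm0, hmh⟩ := hm
  obtain ⟨ha0, ha1⟩ := ha
  have hm1 : m - 1 < 0 := by linarith
  have hmne : m - 1 ≠ 0 := ne_of_lt hm1
  set τ := dphim2 m a with hτ
  have hτdef : τ = (a ^ (m-1) - 1)/(m-1) := if_pos ha1.le
  have h1a : 1 < a ^ (m-1) :=
    (Real.one_lt_rpow_iff_of_pos ha0).mpr (Or.inr ⟨ha1, hm1⟩)
  have hC : C₀ = a ^ (m-1) := by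
    rw [hC₀, hτdef]; field_simp; ring
  have hC1 : 1 < C₀ := hC ▸ h1a
  have hτneg : τ < 0 := by
    rw [hτdef]; exact div_neg_of_pos_of_neg (by linarith) hm1
  have hCτ : 1 + (m-1) * τ = C₀ := by
    rw [hC, hτdef]; field_simp; ring
  have hη0 : 0 < η := by rw [hη]; apply div_pos <;> linarith
  have hη2 : η < 1/2 := by
    rw [hη, div_lt_iff₀ (by linarith)]; linarith
  have hD : ddphim2 m a = a ^ (m-2) := if_pos ha1.le
  set A := C₀ + (1 - m) with hA
  have hA1 : 1 < A := by simp only [hA]; linarith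
  have hA0 : (0:ℝ) < A := by linarith
  set K := min (A ^ (-(3/2 - η))) ((ddphim2 m a) ^ (-(1/2) : ℝ)) with hK
  have hK0 : 0 ≤ K := le_min (Real.rpow_nonneg hA0.le _) (Real.rpow_nonneg (by rw [hD]; positivity) _)
  have hKA : K ≤ A ^ (η - 3/2) := by
    rw [show η - 3/2 = -(3/2 - η) by ring]; exact min_le_left _ _
  have hKA1 : K ≤ A ^ (η - 1) :=
    hKA.trans (Real.rpow_le_rpow_of_exponent_le hA1.le (by linarith))
  -- monotonicity and integrability
  have hf : Monotone (fun s => Real.sqrt (psim2 m (s + τ))) :=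
    fun x y h => Real.sqrt_le_sqrt (psim2_mono hm1 (by linarith))
  have hint : ∀ p q : ℝ, IntervalIntegrable (fun s => Real.sqrt (psim2 m (s + τ))) volume p q :=
    fun p q => hf.intervalIntegrable
  intro r
  rcases le_or_gt 0 r with hr | hr
  · -- nonnegative r
    rw [abs_of_nonneg hr]
    have hKs : K ≤ Real.sqrt a := by
      have hD2 : (ddphim2 m a) ^ (-(1/2) : ℝ) = a ^ ((m-2) * (-(1/2))) := by
        rw [hD, ← Real.rpow_mul ha0.le]
      have h2 : a ^ ((m-2) * (-(1/2))) ≤ a ^ ((1:ℝ)/2) :=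
        Real.rpow_le_rpow_of_exponent_ge ha0 ha1.le (by linarith)
      calc K ≤ (ddphim2 m a) ^ (-(1/2) : ℝ) := min_le_right _ _
        _ ≤ a ^ ((1:ℝ)/2) := by rw [hD2]; exact h2
        _ = Real.sqrt a := (Real.sqrt_eq_rpow a).symm
    have hminr : min (r ^ (3/2 : ℝ)) (r ^ η) ≤ r := by
      rcases eq_or_lt_of_le hr with h0 | h0
      · simp [← h0, Real.zero_rpow (by norm_num : (3/2:ℝ) ≠ 0), Real.zero_rpow hη0.ne']
      · rcases le_total r 1 with h1 | h1
        · calc min (r ^ (3/2 : ℝ)) (r ^ η) ≤ r ^ (3/2 : ℝ) := min_le_left _ _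
            _ ≤ r ^ (1:ℝ) := Real.rpow_le_rpow_of_exponent_ge h0 h1 (by norm_num)
            _ = r := Real.rpow_one r
        · calc min (r ^ (3/2 : ℝ)) (r ^ η) ≤ r ^ η := min_le_right _ _
            _ ≤ r ^ (1:ℝ) := Real.rpow_le_rpow_of_exponent_le h1 (by linarith)
            _ = r := Real.rpow_one r
    have hmin0 : 0 ≤ min (r ^ (3/2 : ℝ)) (r ^ η) :=
      le_min (Real.rpow_nonneg hr _) (Real.rpow_nonneg hr _)
    have hptw : ∀ s ∈ Icc (0:ℝ) r, Real.sqrt a ≤ Real.sqrt (psim2 m (s + τ)) := by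
      intro s hs
      apply Real.sqrt_le_sqrt
      by_cases hsτ : s + τ ≤ 0
      · rw [psim2, if_pos hsτ]
        have hms : (m-1) * s ≤ 0 := mul_nonpos_of_nonpos_of_nonneg hm1.le hs.1
        have hX0 : 0 < 1 + (m-1)*(s+τ) := by nlinarith
        have hXle : 1 + (m-1)*(s+τ) ≤ a ^ (m-1) := by nlinarith [hC ▸ hCτ]
        have hpow : (a ^ (m-1)) ^ (1/(m-1)) = a := by
          rw [← Real.rpow_mul ha0.le, mul_one_div, div_self hmne, Real.rpow_one]
        calc a = (a ^ (m-1)) ^ (1/(m-1)) := hpow.symm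
          _ ≤ (1 + (m-1)*(s+τ)) ^ (1/(m-1)) :=
            Real.rpow_le_rpow_of_nonpos hX0 hXle (one_div_neg.mpr hm1).le
      · rw [psim2, if_neg hsτ]; push_neg at hsτ; linarith
    have hI1 : Real.sqrt a * r ≤ ∫ s in (0:ℝ)..r, Real.sqrt (psim2 m (s + τ)) := by
      have := intervalIntegral.integral_mono_on hr
        (intervalIntegrable_const (c := Real.sqrt a)) (hint 0 r) hptw
      rwa [intervalIntegral.integral_const, sub_zero, smul_eq_mul, mul_comm] at this
    calc 2/3 * K * min (r ^ (3/2 : ℝ)) (r ^ η)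
        ≤ K * min (r ^ (3/2 : ℝ)) (r ^ η) := by nlinarith [mul_nonneg hK0 hmin0]
      _ ≤ Real.sqrt a * r := mul_le_mul hKs hminr hmin0 (Real.sqrt_nonneg a)
      _ ≤ ∫ s in (0:ℝ)..r, Real.sqrt (psim2 m (s + τ)) := hI1
      _ ≤ |∫ s in (0:ℝ)..r, Real.sqrt (psim2 m (s + τ))| := le_abs_self _
  · -- negative r
    rw [abs_of_neg hr]
    set R : ℝ := -r with hR
    have hR0 : 0 < R := by simp [hR]; linarith
    set M : ℝ := max 1 R with hM
    have hM1 : 1 ≤ M := le_max_left _ _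
    have hMR : R ≤ M := le_max_right _ _
    have hM0 : (0:ℝ) < M := by linarith
    set c : ℝ := A ^ (η-1) * M ^ (η-1) with hc
    have hc0 : 0 ≤ c := mul_nonneg (Real.rpow_nonneg hA0.le _) (Real.rpow_nonneg hM0.le _)
    have hptw : ∀ s ∈ Icc r (0:ℝ), c ≤ Real.sqrt (psim2 m (s + τ)) := by
      intro s hs
      have hsτ : s + τ ≤ 0 := by linarith [hs.2]
      rw [psim2, if_pos hsτ]
      set X : ℝ := 1 + (m-1)*(s+τ) with hX
      have hms : 0 ≤ (m-1) * s := by nlinarith [hs.2]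
      have hX0 : 0 < X := by simp only [hX]; nlinarith
      have hXA : X ≤ A * M := by
        have h1 : 0 ≤ (1-m) * (M + s) := mul_nonneg (by linarith) (by linarith [hs.1])
        have h2 : 0 ≤ C₀ * (M - 1) := mul_nonneg (by linarith) (by linarith)
        simp only [hX, hA]; nlinarith
      have hsq : Real.sqrt (X ^ (1/(m-1))) = X ^ (η-1) := by
        rw [Real.sqrt_eq_rpow, ← Real.rpow_mul hX0.le]
        congr 1
        have h1m : (1:ℝ) - m ≠ 0 := by linarith
        rw [hη]; field_simp; ring
      rw [hsq]
      calc c = (A * M) ^ (η-1) := by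
            rw [hc, ← Real.mul_rpow hA0.le hM0.le]
        _ ≤ X ^ (η-1) := Real.rpow_le_rpow_of_nonpos hX0 hXA (by linarith)
    have hI : c * R ≤ ∫ s in r..(0:ℝ), Real.sqrt (psim2 m (s + τ)) := by
      have := intervalIntegral.integral_mono_on hr.le
        (intervalIntegrable_const (c := c)) (hint r 0) hptw
      rwa [intervalIntegral.integral_const, zero_sub, smul_eq_mul, mul_comm, ← hR] at this
    have habs : |∫ s in (0:ℝ)..r, Real.sqrt (psim2 m (s + τ))|
        = ∫ s in r..(0:ℝ), Real.sqrt (psim2 m (s + τ)) := by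
      rw [intervalIntegral.integral_symm r 0, abs_neg,
        abs_of_nonneg (le_trans (mul_nonneg hc0 hR0.le) hI)]
    rw [habs]
    have hmin0 : 0 ≤ min (R ^ (3/2 : ℝ)) (R ^ η) :=
      le_min (Real.rpow_nonneg hR0.le _) (Real.rpow_nonneg hR0.le _)
    rcases le_total R 1 with h1 | h1
    · -- R ≤ 1, M = 1
      have hMeq : M = 1 := max_eq_left h1
      have hceq : c = A ^ (η-1) := by rw [hc, hMeq, Real.one_rpow, mul_one]
      have hminR : min (R ^ (3/2 : ℝ)) (R ^ η) ≤ R := by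
        calc min (R ^ (3/2 : ℝ)) (R ^ η) ≤ R ^ (3/2 : ℝ) := min_le_left _ _
          _ ≤ R ^ (1:ℝ) := Real.rpow_le_rpow_of_exponent_ge hR0 h1 (by norm_num)
          _ = R := Real.rpow_one R
      calc 2/3 * K * min (R ^ (3/2 : ℝ)) (R ^ η)
          ≤ K * min (R ^ (3/2 : ℝ)) (R ^ η) := by nlinarith [mul_nonneg hK0 hmin0]
        _ ≤ A ^ (η-1) * R := mul_le_mul hKA1 hminR hmin0 (Real.rpow_nonneg hA0.le _)
        _ = c * R := by rw [hceq]
        _ ≤ _ := hI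
    · -- 1 ≤ R, M = R
      have hMeq : M = R := max_eq_right h1
      have hcR : c * R = A ^ (η-1) * R ^ η := by
        have h2 : R ^ (η-1) * R = R ^ η := by
          have h3 := Real.rpow_add_one hR0.ne' (η-1)
          rw [show η - 1 + 1 = η by ring] at h3
          exact h3.symm
        rw [hc, hMeq, mul_assoc, h2]
      have hminR : min (R ^ (3/2 : ℝ)) (R ^ η) ≤ R ^ η := min_le_right _ _
      calc 2/3 * K * min (R ^ (3/2 : ℝ)) (R ^ η)
          ≤ K * min (R ^ (3/2 : ℝ)) (R ^ η) := by nlinarith [mul_nonneg hK0 hmin0]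
        _ ≤ A ^ (η-1) * R ^ η := mul_le_mul hKA1 hminR hmin0 (Real.rpow_nonneg hA0.le _)
        _ = c * R := hcR.symm
        _ ≤ _ := hI
end

section
/- Let v : [0,∞) → [0,∞) be differentiable, let Ω : [0,∞) → [0,∞) be nondecreasing with Ω(r) > 0 for all r > 0, let c : (0,∞) → (0,∞), let δ > 0, and let β : [0,∞) → (0,∞) be C¹. Assume that v'(t) ≤ −c(β(t))·Ω(v(t)) + δ·|β'(t)| for all t ≥ 0, that lim_{t→∞} β'(t)/c(β(t)) = 0, and that ∫_1^∞ c(β(t)) dt = +∞. Then liminf_{t→∞} v(t) = 0. -/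
open MeasureTheory Real Set Filter Topology

/-- First ingredient of the schedule-conditions proposition: under the differential
inequality `v' ≤ −c(β)Ω(v) + δ|β'|` with `β'/c(β) → 0` and `∫_1^∞ c(β(t)) dt = +∞`,
one has `liminf_{t→∞} v(t) = 0`. -/
theorem stmt15 (v Ω β c : ℝ → ℝ) (δ : ℝ) (hδ : 0 < δ)
    (hvdiff : ∀ t : ℝ, 0 ≤ t → DifferentiableAt ℝ v t)
    (hv0 : ∀ t : ℝ, 0 ≤ t → 0 ≤ v t)
    (hΩmono : MonotoneOn Ω (Ici 0))
    (hΩ0 : ∀ r : ℝ, 0 ≤ r → 0 ≤ Ω r)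
    (hΩpos : ∀ r : ℝ, 0 < r → 0 < Ω r)
    (hcpos : ∀ b : ℝ, 0 < b → 0 < c b)
    (hβC1 : ContDiff ℝ 1 β) (hβpos : ∀ t : ℝ, 0 ≤ t → 0 < β t)
    (hineq : ∀ t : ℝ, 0 ≤ t → deriv v t ≤ -c (β t) * Ω (v t) + δ * |deriv β t|)
    (hlim : Tendsto (fun t => deriv β t / c (β t)) atTop (𝓝 0))
    (hint : Tendsto (fun T => ∫ t in (1:ℝ)..T, c (β t)) atTop atTop) :
    Filter.liminf v atTop = 0 := by
  set w : ℝ → ℝ := fun T => ∫ t in (1:ℝ)..T, c (β t) with hw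
  -- Key step: no ε > 0 can be an eventual lower bound for v.
  have key : ∀ ε : ℝ, 0 < ε → ¬ (∀ᶠ t in atTop, ε ≤ v t) := by
    intro ε hε hev
    set k : ℝ := Ω ε with hkdef
    have hk : 0 < k := hΩpos ε hε
    -- eventual smallness of |β'/c(β)|
    have h2 : ∀ᶠ t in atTop, |deriv β t / c (β t)| < k / (2 * δ) := by
      have := Metric.tendsto_nhds.mp hlim (k / (2 * δ)) (by positivity)
      filter_upwards [this] with t ht
      rwa [Real.dist_eq, sub_zero] at ht
    obtain ⟨T₀, hT₀⟩ := eventually_atTop.mp (hev.and (h2.and (eventually_ge_atTop (1:ℝ))))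
    have hT₀1 : (1:ℝ) ≤ T₀ := (hT₀ T₀ le_rfl).2.2
    -- derivative bound for t ≥ T₀
    have hder : ∀ t : ℝ, T₀ ≤ t → deriv v t ≤ -(k / 2) * c (β t) := by
      intro t ht
      obtain ⟨h1, h2', h3⟩ := hT₀ t ht
      have ht0 : (0:ℝ) ≤ t := by linarith
      have hc : 0 < c (β t) := hcpos _ (hβpos t ht0)
      have hΩ : k ≤ Ω (v t) := hΩmono (le_of_lt hε) (hv0 t ht0) h1
      have habs : |deriv β t| < k / (2 * δ) * c (β t) := by
        have : |deriv β t / c (β t)| = |deriv β t| / c (β t) := by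
          rw [abs_div, abs_of_pos hc]
        rw [this, div_lt_iff₀ hc] at h2'
        exact h2'
      have hb : δ * |deriv β t| ≤ k / 2 * c (β t) := by
        have := mul_le_mul_of_nonneg_left habs.le hδ.le
        calc δ * |deriv β t| ≤ δ * (k / (2 * δ) * c (β t)) := this
          _ = k / 2 * c (β t) := by field_simp
      calc deriv v t ≤ -c (β t) * Ω (v t) + δ * |deriv β t| := hineq t ht0
        _ ≤ -c (β t) * k + k / 2 * c (β t) := by
            refine add_le_add ?_ hb
            have := mul_le_mul_of_nonneg_left hΩ hc.le
            nlinarith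
        _ = -(k / 2) * c (β t) := by ring
    -- choose b large
    set M : ℝ := 2 / k * v T₀ + w T₀ + 1 with hM
    obtain ⟨b, hbM, hbT₀⟩ :
        ∃ b : ℝ, max M 1 ≤ w b ∧ T₀ ≤ b := by
      have := (hint.eventually_ge_atTop (max M 1)).and (eventually_ge_atTop T₀)
      obtain ⟨b, hb⟩ := this.exists
      exact ⟨b, hb.1, hb.2⟩
    have hwb1 : (1:ℝ) ≤ w b := le_trans (le_max_right _ _) hbM
    have hwbM : M ≤ w b := le_trans (le_max_left _ _) hbM
    -- integrability on [1, b]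
    have hii : IntervalIntegrable (fun t => c (β t)) volume 1 b := by
      by_contra hni
      have hwb1' : (1:ℝ) ≤ ∫ t in (1:ℝ)..b, c (β t) := hwb1
      rw [intervalIntegral.integral_undef hni] at hwb1'
      linarith
    have hii2 : IntervalIntegrable (fun t => c (β t)) volume T₀ b :=
      hii.mono_set (uIcc_subset_uIcc
        (by rw [uIcc_of_le (le_trans hT₀1 hbT₀)]; exact ⟨hT₀1, hbT₀⟩)
        (by rw [uIcc_of_le (le_trans hT₀1 hbT₀)]; exact ⟨le_trans hT₀1 hbT₀, le_rfl⟩))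
    have hii1 : IntervalIntegrable (fun t => c (β t)) volume 1 T₀ :=
      hii.mono_set (uIcc_subset_uIcc
        (by rw [uIcc_of_le (le_trans hT₀1 hbT₀)]; exact ⟨le_rfl, le_trans hT₀1 hbT₀⟩)
        (by rw [uIcc_of_le (le_trans hT₀1 hbT₀)]; exact ⟨hT₀1, hbT₀⟩))
    have hsplit : w T₀ + ∫ t in T₀..b, c (β t) = w b :=
      intervalIntegral.integral_add_adjacent_intervals hii1 hii2
    -- FTC comparison
    have hcomp : v b - v T₀ ≤ ∫ t in T₀..b, -(k / 2) * c (β t) := by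
      apply intervalIntegral.sub_le_integral_of_hasDeriv_right_of_le hbT₀
      · intro x hx
        have hx0 : (0:ℝ) ≤ x := le_trans (by linarith) hx.1
        exact (hvdiff x hx0).continuousAt.continuousWithinAt
      · intro x hx
        have hx0 : (0:ℝ) ≤ x := le_trans (by linarith) hx.1.le
        exact ((hvdiff x hx0).hasDerivAt).hasDerivWithinAt
      · have : IntegrableOn (fun t => c (β t)) (Icc T₀ b) volume := by
          rw [integrableOn_Icc_iff_integrableOn_Ioc]
          exact hii2.1
        exact (this.const_mul _)
      · intro x hx
        exact hder x hx.1.le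
    have hcint : ∫ t in T₀..b, -(k / 2) * c (β t) = -(k / 2) * (w b - w T₀) := by
      rw [intervalIntegral.integral_const_mul]
      congr 1
      linarith
    have hvb : v b ≤ -(k / 2) := by
      have h1 : v b - v T₀ ≤ -(k / 2) * (w b - w T₀) := by
        rw [← hcint]; exact hcomp
      have h2 : w b - w T₀ ≥ 2 / k * v T₀ + 1 := by
        rw [hM] at hwbM; linarith
      have hvT₀ : 0 ≤ v T₀ := hv0 T₀ (by linarith)
      have : -(k / 2) * (w b - w T₀) ≤ -(k / 2) * (2 / k * v T₀ + 1) := by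
        apply mul_le_mul_of_nonpos_left h2 (by linarith)
      have heq : -(k / 2) * (2 / k * v T₀ + 1) = -(v T₀) - k / 2 := by
        field_simp; ring
      linarith
    have : 0 ≤ v b := hv0 b (by linarith)
    linarith
  -- Now compute the liminf.
  have hS : {a : ℝ | ∀ᶠ t in atTop, a ≤ v t} = Iic 0 := by
    ext a
    simp only [mem_setOf_eq, mem_Iic]
    constructor
    · intro h
      by_contra hpos
      exact key a (lt_of_not_ge hpos) h
    · intro ha
      filter_upwards [eventually_ge_atTop (0:ℝ)] with t ht
      exact le_trans ha (hv0 t ht)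
  rw [Filter.liminf_eq]
  have : {a : ℝ | ∀ᶠ t in atTop, a ≤ v t} = Iic 0 := hS
  rw [show {a : ℝ | ∀ᶠ t in atTop, a ≤ v t} = Iic 0 from hS]
  exact csSup_Iic
end

section
/- Let v : [0,∞) → [0,∞) be differentiable, let Ω : [0,∞) → [0,∞) be nondecreasing with Ω(r) > 0 for all r > 0, let c : (0,∞) → (0,∞), let δ > 0, and let β : [0,∞) → (0,∞) be C¹. Assume that v'(t) ≤ −c(β(t))·Ω(v(t)) + δ·|β'(t)| for all t ≥ 0, that lim_{t→∞} β'(t)/c(β(t)) = 0, and that ∫_1^∞ c(β(t)) dt = +∞. Then lim_{t→∞} v(t) = 0. -/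
open MeasureTheory Real Set Filter Topology

/-- Schedule conditions: under the differential inequality
`v' ≤ −c(β)Ω(v) + δ|β'|` with `β'/c(β) → 0` and `∫_1^∞ c(β(t)) dt = +∞`,
the function `v` converges to `0` at infinity. -/
theorem stmt17 (v Ω β c : ℝ → ℝ) (δ : ℝ) (hδ : 0 < δ)
    (hvdiff : ∀ t : ℝ, 0 ≤ t → DifferentiableAt ℝ v t)
    (hv0 : ∀ t : ℝ, 0 ≤ t → 0 ≤ v t)
    (hΩmono : MonotoneOn Ω (Ici 0))
    (hΩ0 : ∀ r : ℝ, 0 ≤ r → 0 ≤ Ω r)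
    (hΩpos : ∀ r : ℝ, 0 < r → 0 < Ω r)
    (hcpos : ∀ b : ℝ, 0 < b → 0 < c b)
    (hβC1 : ContDiff ℝ 1 β) (hβpos : ∀ t : ℝ, 0 ≤ t → 0 < β t)
    (hineq : ∀ t : ℝ, 0 ≤ t → deriv v t ≤ -c (β t) * Ω (v t) + δ * |deriv β t|)
    (hlim : Tendsto (fun t => deriv β t / c (β t)) atTop (𝓝 0))
    (hint : Tendsto (fun T => ∫ t in (1:ℝ)..T, c (β t)) atTop atTop) :
    Tendsto v atTop (𝓝 0) := by
  -- nonnegativity of c ∘ β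
  have hcβnn : ∀ t : ℝ, 0 ≤ t → 0 ≤ c (β t) := fun t ht => (hcpos _ (hβpos t ht)).le
  -- integrability of c ∘ β on intervals [a,b] with 1 ≤ a
  have hInt : ∀ a b : ℝ, 1 ≤ a → a ≤ b →
      IntervalIntegrable (fun t => c (β t)) volume a b := by
    intro a b ha hab
    obtain ⟨S, hSb, hS1⟩ : ∃ S, b ≤ S ∧ 1 ≤ ∫ t in (1:ℝ)..S, c (β t) := by
      obtain ⟨S, h⟩ := ((hint.eventually_ge_atTop 1).and (eventually_ge_atTop b)).exists
      exact ⟨S, h.2, h.1⟩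
    have hIS : IntervalIntegrable (fun t => c (β t)) volume 1 S := by
      by_contra h
      rw [intervalIntegral.integral_undef h] at hS1; linarith
    refine hIS.mono_set ?_
    rw [uIcc_of_le hab, uIcc_of_le (ha.trans hab |>.trans hSb)]
    exact Icc_subset_Icc ha hSb
  -- the main eventual smallness claim
  have main : ∀ ε : ℝ, 0 < ε → ∀ᶠ t in atTop, v t < ε := by
    intro ε hε
    set m := Ω (ε / 2) with hm_def
    have hm : 0 < m := hΩpos _ (by linarith)
    -- eventual bound on δ|β'|
    have hbound : ∀ᶠ t in atTop, δ * |deriv β t| ≤ m / 2 * c (β t) := by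
      have hr : (0:ℝ) < m / (2 * δ) := by positivity
      have h1 : ∀ᶠ t in atTop, |deriv β t| / |c (β t)| < m / (2 * δ) := by
        have := hlim.eventually (Metric.ball_mem_nhds (0:ℝ) hr)
        filter_upwards [this] with t ht
        simpa [Real.dist_eq, abs_div] using ht
      filter_upwards [h1, eventually_ge_atTop (0:ℝ)] with t ht ht0
      have hc : 0 < c (β t) := hcpos _ (hβpos t ht0)
      rw [abs_of_pos hc] at ht
      have : |deriv β t| < m / (2 * δ) * c (β t) := by
        rw [div_lt_iff₀ hc] at ht; linarith
      calc δ * |deriv β t| ≤ δ * (m / (2 * δ) * c (β t)) := by nlinarith [abs_nonneg (deriv β t)]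
        _ = m / 2 * c (β t) := by field_simp
    obtain ⟨T', hT'⟩ := hbound.exists_forall_of_atTop
    set T : ℝ := max 1 T' with hT_def
    have hT1 : (1:ℝ) ≤ T := le_max_left _ _
    have hTT' : T' ≤ T := le_max_right _ _
    -- continuity of v on positive intervals
    have hvcont : ∀ a b : ℝ, 1 ≤ a → ContinuousOn v (Icc a b) := by
      intro a b ha x hx
      exact (hvdiff x (by linarith [hx.1])).continuousAt.continuousWithinAt
    -- key decrease estimate
    have hdec : ∀ a b : ℝ, T ≤ a → a ≤ b → (∀ t ∈ Ioo a b, ε / 2 ≤ v t) →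
        v b - v a ≤ -(m / 2) * ∫ t in a..b, c (β t) := by
      intro a b haT hab hmid
      have ha1 : (1:ℝ) ≤ a := hT1.trans haT
      have hφint : IntegrableOn (fun t => -(m / 2) * c (β t)) (Icc a b) volume := by
        have := (hInt a b ha1 hab).1
        exact ((integrableOn_Icc_iff_integrableOn_Ioc (by simp)).2 this).const_mul _
      have key := intervalIntegral.sub_le_integral_of_hasDeriv_right_of_le hab
        (hvcont a b ha1)
        (fun x hx => (hvdiff x (by linarith [hx.1])).hasDerivAt.hasDerivWithinAt)
        hφint
        (fun x hx => ?_)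
      · calc v b - v a ≤ ∫ t in a..b, -(m / 2) * c (β t) := key
          _ = -(m / 2) * ∫ t in a..b, c (β t) := intervalIntegral.integral_const_mul _ _
      · -- deriv v x ≤ -(m/2) c(β x)
        have hx0 : (0:ℝ) ≤ x := by linarith [hx.1]
        have h1 := hineq x hx0
        have h2 : δ * |deriv β x| ≤ m / 2 * c (β x) := hT' x (hTT'.trans (haT.trans hx.1.le))
        have h3 : m ≤ Ω (v x) := by
          refine hΩmono (by simp; linarith : (ε/2:ℝ) ∈ Ici (0:ℝ))
            (mem_Ici.2 (hv0 x hx0)) (hmid x hx)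
        have hc : 0 ≤ c (β x) := hcβnn x hx0
        nlinarith
    -- existence of a time where v drops below ε/2
    have ht₀ : ∃ t₀, T ≤ t₀ ∧ v t₀ < ε / 2 := by
      by_contra h
      push_neg at h
      have hS : ∀ S, T ≤ S → m / 2 * ∫ t in T..S, c (β t) ≤ v T := by
        intro S hS
        have := hdec T S le_rfl hS (fun t ht => h t (ht.1.le))
        have hvS : 0 ≤ v S := hv0 S (by linarith [hT1.trans hS])
        linarith
      have hdiv : Tendsto (fun S => ∫ t in T..S, c (β t)) atTop atTop := by
        have heq : ∀ᶠ S in atTop, (∫ t in (1:ℝ)..S, c (β t)) - (∫ t in (1:ℝ)..T, c (β t))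
            = ∫ t in T..S, c (β t) := by
          filter_upwards [eventually_ge_atTop T] with S hST
          have := intervalIntegral.integral_add_adjacent_intervals
            (hInt 1 T le_rfl hT1) (hInt T S hT1 hST)
          linarith
        exact Tendsto.congr' heq (tendsto_atTop_add_const_right _ _ hint)
      obtain ⟨S, hST, hSbig⟩ : ∃ S, T ≤ S ∧ 2 / m * v T + 1 ≤ ∫ t in T..S, c (β t) := by
        obtain ⟨S, h⟩ := ((hdiv.eventually_ge_atTop (2 / m * v T + 1)).and
          (eventually_ge_atTop T)).exists
        exact ⟨S, h.2, h.1⟩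
      have := hS S hST
      have hvT : 0 ≤ v T := hv0 T (by linarith)
      have hmul := mul_le_mul_of_nonneg_left hSbig (by positivity : (0:ℝ) ≤ m / 2)
      have h2 : m / 2 * (2 / m * v T + 1) = v T + m / 2 := by field_simp
      linarith
    obtain ⟨t₀, ht₀T, ht₀v⟩ := ht₀
    -- barrier: v stays below ε after t₀
    have hfin : ∀ t₁, t₀ ≤ t₁ → v t₁ < ε := by
      intro t₁ h₁
      by_contra h
      push_neg at h
      have ht₀t₁ : t₀ < t₁ := by
        rcases h₁.lt_or_eq with h' | rfl
        · exact h'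
        · linarith
      set A := {t ∈ Icc t₀ t₁ | v t ≤ ε / 2} with hA_def
      have hA_ne : A.Nonempty := ⟨t₀, ⟨le_rfl, h₁⟩, ht₀v.le⟩
      have hA_closed : IsClosed A := by
        have h := (hvcont t₀ t₁ (hT1.trans ht₀T)).preimage_isClosed_of_isClosed
          isClosed_Icc (isClosed_Iic (a := ε / 2))
        have : A = Icc t₀ t₁ ∩ v ⁻¹' Iic (ε / 2) := by ext t; simp [hA_def]
        rw [this]; exact h
      have hA_cpt : IsCompact A :=
        isCompact_Icc.of_isClosed_subset hA_closed (sep_subset _ _)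
      set s := sSup A with hs_def
      have hsA : s ∈ A := hA_cpt.sSup_mem hA_ne
      have hst₁ : s < t₁ := by
        rcases hsA.1.2.lt_or_eq with h' | h'
        · exact h'
        · exfalso; rw [h'] at hsA; linarith [hsA.2]
      have hmid : ∀ t ∈ Ioo s t₁, ε / 2 ≤ v t := by
        intro t ht
        by_contra hvt
        push_neg at hvt
        have htA : t ∈ A := ⟨⟨hsA.1.1.trans ht.1.le, ht.2.le⟩, hvt.le⟩
        have := le_csSup hA_cpt.bddAbove htA
        linarith [ht.1]
      have hkey := hdec s t₁ (ht₀T.trans hsA.1.1) hst₁.le hmid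
      have hintnn : 0 ≤ ∫ t in s..t₁, c (β t) :=
        intervalIntegral.integral_nonneg hst₁.le
          (fun u hu => hcβnn u (by linarith [hu.1, hT1.trans (ht₀T.trans hsA.1.1)]))
      nlinarith [hsA.2]
    filter_upwards [eventually_ge_atTop t₀] with t ht using hfin t ht
  -- conclude
  rw [NormedAddCommGroup.tendsto_nhds_zero]
  intro ε hε
  filter_upwards [main ε hε, eventually_ge_atTop (0:ℝ)] with t h1 h2
  rwa [Real.norm_eq_abs, abs_of_nonneg (hv0 t h2)]
end
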